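/- Let A be the heart of a bounded t-structure of a triangulated category, let (T,F) be a torsion pair in A, and let (T',F') be a torsion pair in the tilted heart A* = ⟨F, T[−1]⟩. If T' ⊂ F, then the left tilt A** = ⟨F', T'[−1]⟩ of A* equals the left tilt of A with respect to the torsion pair (T ⋆ T', F ∩ F'). -/

import Mathlib

open CategoryTheory Limits Pretriangulated

universe v u

namespace GreenSeqPaper

/-! ## Hearts of bounded t-structures, simple tilts, green sequences

We formalize hearts of bounded t-structures of a (pre)triangulated category `D`
concretely, as sets of objects `H : Set D` satisfying Bridgeland's
characterization: negative self-Homs vanish and every object of `D` is a finite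
extension of shifts of objects of `H`.  Short exact sequences in the heart are
exactly the distinguished triangles with all three vertices in the heart. -/


variable {D : Type u} [Category.{v} D] [Preadditive D] [Limits.HasZeroObject D]
  [HasShift D ℤ] [∀ n : ℤ, (CategoryTheory.shiftFunctor D n).Additive] [Pretriangulated D]

/-- The set of objects isomorphic to an `n`-fold shift of an object of `H`. -/
def shiftSet (H : Set D) (n : ℤ) : Set D := { X | ∃ Y ∈ H, Nonempty (X ≅ Y⟦n⟧) }

/-- `E` is an extension of `B` by `A`: there is a distinguished triangle
`A ⟶ E ⟶ B ⟶ A⟦1⟧`.  When `A`, `E`, `B` all lie in the heart of a t-structure,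
this says exactly that `0 ⟶ A ⟶ E ⟶ B ⟶ 0` is a short exact sequence in the heart. -/
def IsExt (A E B : D) : Prop :=
  ∃ (f : A ⟶ E) (g : E ⟶ B) (h : B ⟶ A⟦(1 : ℤ)⟧), Triangle.mk f g h ∈ distTriang D

/-- The objects of `D` generated from `H` by shifts and finitely many extensions. -/
inductive GeneratedBy (H : Set D) : D → Prop
  | zero {E : D} : IsZero E → GeneratedBy H E
  | shift {Y : D} (hY : Y ∈ H) (n : ℤ) {E : D} : Nonempty (E ≅ Y⟦n⟧) → GeneratedBy H E
  | ext {A E B : D} : GeneratedBy H A → GeneratedBy H B → IsExt A E B → GeneratedBy H E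

/-- `H` is (the set of objects of) the heart of a bounded t-structure on `D`
(Bridgeland's characterization of hearts of bounded t-structures). -/
structure IsHeart (H : Set D) : Prop where
  isoClosed : ∀ {X Y : D}, X ∈ H → (X ≅ Y) → Y ∈ H
  zero_mem : ∀ {X : D}, IsZero X → X ∈ H
  negHom : ∀ X ∈ H, ∀ Y ∈ H, ∀ n : ℤ, n < 0 → ∀ f : X ⟶ Y⟦n⟧, f = 0
  extClosed : ∀ {A E B : D}, A ∈ H → B ∈ H → IsExt A E B → E ∈ H
  generates : ∀ E : D, GeneratedBy H E

/-- A simple object of the abelian category `H`: it is nonzero and admits no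
short exact sequence `0 ⟶ A ⟶ S ⟶ B ⟶ 0` in `H` with both `A` and `B` nonzero. -/
def IsSimpleIn (H : Set D) (S : D) : Prop :=
  S ∈ H ∧ ¬ IsZero S ∧
    ∀ A B : D, A ∈ H → B ∈ H → IsExt A S B → IsZero A ∨ IsZero B

/-- `E ∈ H` has finite length: it admits a finite filtration with simple subquotients. -/
inductive FinLength (H : Set D) : D → Prop
  | zero {E : D} : IsZero E → FinLength H E
  | step {A E S : D} : A ∈ H → IsSimpleIn H S → IsExt A E S → FinLength H A → FinLength H E

/-- An algebraic heart: a heart of a bounded t-structure which has finite length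
and finitely many simple objects (up to isomorphism). -/
structure IsAlgebraicHeart (H : Set D) : Prop where
  heart : IsHeart H
  finLength : ∀ E ∈ H, FinLength H E
  finSimples : ∃ (n : ℕ) (f : Fin n → D), ∀ S : D, IsSimpleIn H S → ∃ i, Nonempty (S ≅ f i)

/-- `H` has exactly `n` simple objects up to isomorphism. -/
def HasNSimples (H : Set D) (n : ℕ) : Prop :=
  ∃ f : Fin n → D, (∀ i, IsSimpleIn H (f i)) ∧ (∀ i j, Nonempty (f i ≅ f j) → i = j) ∧
    ∀ S : D, IsSimpleIn H S → ∃ i, Nonempty (S ≅ f i)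

/-- A torsion pair `(T, F)` in the heart `H`. -/
structure IsTorsionPair (H T F : Set D) : Prop where
  subsetT : T ⊆ H
  subsetF : F ⊆ H
  isoClosedT : ∀ {X Y : D}, X ∈ T → (X ≅ Y) → Y ∈ T
  isoClosedF : ∀ {X Y : D}, X ∈ F → (X ≅ Y) → Y ∈ F
  hom_zero : ∀ t ∈ T, ∀ f ∈ F, ∀ φ : t ⟶ f, φ = 0
  ses : ∀ E ∈ H, ∃ t ∈ T, ∃ b ∈ F, IsExt t E b

/-- A torsion class in the heart `H`. -/
def IsTorsionClass (H T : Set D) : Prop := ∃ F, IsTorsionPair H T F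

/-- The Gabriel product `C₁ ⋆ C₂`: objects `E` admitting a short exact sequence
`0 ⟶ C₁ ⟶ E ⟶ C₂ ⟶ 0` with `Cᵢ ∈ 𝒞ᵢ`. -/
def gabriel (C₁ C₂ : Set D) : Set D := { E | ∃ A ∈ C₁, ∃ B ∈ C₂, IsExt A E B }

/-- The (left) tilt `⟨F, T[-1]⟩` of a heart with respect to a torsion pair `(T, F)`:
objects `E` with a distinguished triangle `f ⟶ E ⟶ t⟦-1⟧ ⟶ f⟦1⟧`, `f ∈ F`, `t ∈ T`;
equivalently (in terms of the cohomology objects `Hⁱ` with respect to the given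
t-structure) the objects `E` with `Hⁱ E = 0` for `i ∉ {0,1}`, `H⁰ E ∈ F`, `H¹ E ∈ T`. -/
def tilted (T F : Set D) : Set D := gabriel F (shiftSet T (-1))

/-- The extension closure `⟨S⟩` of a single object `S`. -/
inductive extGen (S : D) : D → Prop
  | zero {E : D} : IsZero E → extGen S E
  | of {E : D} : Nonempty (E ≅ S) → extGen S E
  | ext {A E B : D} : extGen S A → extGen S B → IsExt A E B → extGen S E

/-- The torsion-free class `{E ∈ H | Hom(S, E) = 0}` of the torsion pair `(⟨S⟩, F)`
associated to a simple object `S` of `H`. -/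
def torsionFreeOf (H : Set D) (S : D) : Set D := { E | E ∈ H ∧ ∀ f : S ⟶ E, f = 0 }

/-- The simple (left) tilt of the heart `H` at a simple object `S`. -/
def simpleTilt (H : Set D) (S : D) : Set D := tilted (setOf (extGen S)) (torsionFreeOf H S)

/-- The hearts obtained from `A` by finite sequences of simple tilts. -/
inductive Reachable (A : Set D) : Set D → Prop
  | refl : Reachable A A
  | tilt {H : Set D} {S : D} : Reachable A H → IsSimpleIn H S → Reachable A (simpleTilt H S)

/-- `A` can be tilted indefinitely: every heart obtained from `A` by a finite
sequence of simple tilts is again an algebraic heart with `n` simple objects. -/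
def TiltsIndefinitely (A : Set D) (n : ℕ) : Prop :=
  ∀ H : Set D, Reachable A H →
    IsHeart H ∧ (∀ E ∈ H, FinLength H E) ∧ HasNSimples H n

/-- A green sequence of the heart `A` of length `k`: a sequence of `k` simple
tilts starting at `A`, in which we strictly tilt at (simple) objects lying in `A`. -/
structure GreenSeq (A : Set D) (k : ℕ) where
  hearts : Fin (k + 1) → Set D
  simples : Fin k → D
  init : hearts 0 = A
  simple : ∀ i : Fin k, IsSimpleIn (hearts i.castSucc) (simples i)
  strict : ∀ i : Fin k, simples i ∈ A
  tilt : ∀ i : Fin k, hearts i.succ = simpleTilt (hearts i.castSucc) (simples i)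

/-- A green sequence is maximal if its last heart is the shifted heart `A[-1]`. -/
def GreenSeq.IsMaximal {A : Set D} {k : ℕ} (G : GreenSeq A k) : Prop :=
  G.hearts (Fin.last k) = shiftSet A (-1)

/-- An object `E` of the heart `H` is endo-trivial if `Hom_H(E,E)` is a skew field,
i.e. `E` is nonzero and every nonzero endomorphism of `E` is invertible. -/
def EndoTrivial (E : D) : Prop :=
  ¬ IsZero E ∧ ∀ f : E ⟶ E, f ≠ 0 → IsIso f

/-- `HasClass Sm E v`: the object `E` has class `v = ∑ vᵢ [Sm i]` in the
Grothendieck group of the heart, computed via a composition series with simple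
factors among the `Sm i`. -/
inductive HasClass {n : ℕ} (Sm : Fin n → D) : D → (Fin n → ℤ) → Prop
  | zero {E : D} : IsZero E → HasClass Sm E 0
  | step {A E : D} {i : Fin n} {v : Fin n → ℤ} :
      HasClass Sm A v → IsExt A E (Sm i) → HasClass Sm E (v + Pi.single i 1)

/-! Since `tilted T F = F ⋆ T[-1]` and shifts commute with Gabriel products, the torsion
decompositions for `(T ⋆ T', F ∩ F')` and both inclusions `F' ⋆ T'[-1] ⊆ (F ∩ F') ⋆ (T ⋆ T')[-1]`
and back come down to reassociating iterated extensions, `X ⋆ (Y ⋆ Z) = (X ⋆ Y) ⋆ Z`. In a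
triangulated category this is the octahedral axiom; `D` is only assumed pretriangulated, but all
the objects involved are shifts of objects of `A` placed in degrees where the relevant `Hom`s
vanish, and these vanishings are enough to build the reassociated triangles by hand. -/

open Category Preadditive ZeroObject

section Triangles

omit [HasZeroObject D] [Pretriangulated D] in
lemma hom_shift_one_eq_zero_iff (P Q : D) :
    (∀ f : P⟦(1 : ℤ)⟧ ⟶ Q, f = 0) ↔ ∀ f : P ⟶ Q⟦(-1 : ℤ)⟧, f = 0 := by
  let i : Q⟦(-1 : ℤ)⟧⟦(1 : ℤ)⟧ ≅ Q := (shiftFunctorCompIsoId D (-1 : ℤ) 1 (by norm_num)).app Q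
  constructor
  · intro h f
    have : f⟦(1 : ℤ)⟧' = 0 := by simpa using h (f⟦(1 : ℤ)⟧' ≫ i.hom) =≫ i.inv
    exact (shiftFunctor D (1 : ℤ)).map_eq_zero_iff.mp this
  · intro h f
    obtain ⟨g, hg⟩ := (shiftFunctor D (1 : ℤ)).map_surjective (f ≫ i.inv)
    rw [h g, Functor.map_zero] at hg
    simpa using (hg =≫ i.hom).symm

lemma Triangle.hom_eq_zero_obj₂_of_src {T : Triangle D} (hT : T ∈ distTriang D) {U : D}
    (h₁ : ∀ f : U ⟶ T.obj₁, f = 0) (h₃ : ∀ f : U ⟶ T.obj₃, f = 0) (f : U ⟶ T.obj₂) : f = 0 := by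
  obtain ⟨g, rfl⟩ := Triangle.coyoneda_exact₂ _ hT f (h₃ _)
  rw [h₁ g, zero_comp]

lemma Triangle.hom_eq_zero_obj₂_of_tgt {T : Triangle D} (hT : T ∈ distTriang D) {U : D}
    (h₁ : ∀ f : T.obj₁ ⟶ U, f = 0) (h₃ : ∀ f : T.obj₃ ⟶ U, f = 0) (f : T.obj₂ ⟶ U) : f = 0 := by
  obtain ⟨g, rfl⟩ := Triangle.yoneda_exact₂ _ hT f (h₁ _)
  rw [h₃ g, comp_zero]

variable {P Q R : D} {a : P ⟶ Q} {b : Q ⟶ R} {c : R ⟶ P⟦(1 : ℤ)⟧}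

lemma mk_comp_zero₁₂ (hT : Triangle.mk a b c ∈ distTriang D) : a ≫ b = 0 :=
  comp_distTriang_mor_zero₁₂ _ hT

lemma mk_comp_zero₂₃ (hT : Triangle.mk a b c ∈ distTriang D) : b ≫ c = 0 :=
  comp_distTriang_mor_zero₂₃ _ hT

lemma mk_comp_zero₃₁ (hT : Triangle.mk a b c ∈ distTriang D) : c ≫ a⟦(1 : ℤ)⟧' = 0 :=
  comp_distTriang_mor_zero₃₁ _ hT

lemma mk_coyoneda_exact₁ (hT : Triangle.mk a b c ∈ distTriang D) {U : D}
    (f : U ⟶ P⟦(1 : ℤ)⟧) (hf : f ≫ a⟦(1 : ℤ)⟧' = 0) : ∃ g : U ⟶ R, f = g ≫ c :=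
  Triangle.coyoneda_exact₁ _ hT f hf

lemma mk_coyoneda_exact₂ (hT : Triangle.mk a b c ∈ distTriang D) {U : D}
    (f : U ⟶ Q) (hf : f ≫ b = 0) : ∃ g : U ⟶ P, f = g ≫ a :=
  Triangle.coyoneda_exact₂ _ hT f hf

lemma mk_coyoneda_exact₃ (hT : Triangle.mk a b c ∈ distTriang D) {U : D}
    (f : U ⟶ R) (hf : f ≫ c = 0) : ∃ g : U ⟶ Q, f = g ≫ b :=
  Triangle.coyoneda_exact₃ _ hT f hf

lemma mk_yoneda_exact₁ (hT : Triangle.mk a b c ∈ distTriang D) {U : D}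
    (f : P⟦(1 : ℤ)⟧ ⟶ U) (hf : c ≫ f = 0) : ∃ g : Q⟦(1 : ℤ)⟧ ⟶ U, f = a⟦(1 : ℤ)⟧' ≫ g := by
  obtain ⟨g, hg⟩ := Triangle.yoneda_exact₃ _ (rot_of_distTriang _ hT) f hf
  exact ⟨-g, hg.trans ((neg_comp _ _).trans (comp_neg _ _).symm)⟩

lemma mk_yoneda_exact₂ (hT : Triangle.mk a b c ∈ distTriang D) {U : D}
    (f : Q ⟶ U) (hf : a ≫ f = 0) : ∃ g : R ⟶ U, f = b ≫ g :=
  Triangle.yoneda_exact₂ _ hT f hf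

lemma mk_yoneda_exact₃ (hT : Triangle.mk a b c ∈ distTriang D) {U : D}
    (f : R ⟶ U) (hf : b ≫ f = 0) : ∃ g : P⟦(1 : ℤ)⟧ ⟶ U, f = c ≫ g :=
  Triangle.yoneda_exact₃ _ hT f hf

lemma mk_yoneda_exact₁_of_shift (hT : Triangle.mk a b c ∈ distTriang D) {U : D}
    (f : P ⟶ U) (hf : c ≫ f⟦(1 : ℤ)⟧' = 0) : ∃ g : Q ⟶ U, f = a ≫ g := by
  obtain ⟨g, hg⟩ := mk_yoneda_exact₁ hT _ hf
  obtain ⟨g, rfl⟩ := (shiftFunctor D (1 : ℤ)).map_surjective g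
  exact ⟨g, (shiftFunctor D (1 : ℤ)).map_injective (by rw [hg, Functor.map_comp])⟩

lemma eq_zero_of_comp_mor₁_eq_zero (hT : Triangle.mk a b c ∈ distTriang D) {U : D}
    (hU : ∀ f : U⟦(1 : ℤ)⟧ ⟶ R, f = 0) (x : U ⟶ P) (hx : x ≫ a = 0) : x = 0 := by
  obtain ⟨g, hg⟩ := mk_coyoneda_exact₁ hT (x⟦(1 : ℤ)⟧')
    (by rw [← Functor.map_comp, hx, Functor.map_zero])
  rw [hU g, zero_comp] at hg
  exact (shiftFunctor D (1 : ℤ)).map_eq_zero_iff.mp hg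

lemma eq_zero_of_mor₂_comp_eq_zero (hT : Triangle.mk a b c ∈ distTriang D) {U : D}
    (hU : ∀ f : P⟦(1 : ℤ)⟧ ⟶ U, f = 0) (y : R ⟶ U) (hy : b ≫ y = 0) : y = 0 := by
  obtain ⟨g, rfl⟩ := mk_yoneda_exact₃ hT y hy
  rw [hU g, comp_zero]

lemma mk_distinguished_of_iso₃ (hT : Triangle.mk a b c ∈ distTriang D) {R' : D} (e : R ⟶ R')
    [IsIso e] : Triangle.mk a (b ≫ e) (inv e ≫ c) ∈ distTriang D :=
  isomorphic_distinguished _ hT _ (Triangle.isoMk _ _ (Iso.refl _) (Iso.refl _) (asIso e).symm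
    (by simp [Triangle.mk]) (by simp [Triangle.mk]) (by simp [Triangle.mk]))

lemma mk_distinguished_of_iso₁ (hT : Triangle.mk a b c ∈ distTriang D) {P' : D} (e : P' ⟶ P)
    [IsIso e] : Triangle.mk (e ≫ a) b (c ≫ (inv e)⟦(1 : ℤ)⟧') ∈ distTriang D :=
  isomorphic_distinguished _ hT _ (Triangle.isoMk _ _ (asIso e : P' ≅ P) (Iso.refl _) (Iso.refl _)
    (by simp [Triangle.mk]) (by simp [Triangle.mk]) (by simp [Triangle.mk]))

variable {P' Q' R' : D} {a' : P' ⟶ Q'} {b' : Q' ⟶ R'} {c' : R' ⟶ P'⟦(1 : ℤ)⟧}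

lemma mk_complete_morphism (hT : Triangle.mk a b c ∈ distTriang D)
    (hT' : Triangle.mk a' b' c' ∈ distTriang D) (e₁ : P ⟶ P') (e₂ : Q ⟶ Q') (h : a ≫ e₂ = e₁ ≫ a') :
    ∃ e₃ : R ⟶ R', b ≫ e₃ = e₂ ≫ b' ∧ c ≫ e₁⟦(1 : ℤ)⟧' = e₃ ≫ c' :=
  complete_distinguished_triangle_morphism _ _ hT hT' e₁ e₂ h

lemma mk_complete_morphism₁ (hT : Triangle.mk a b c ∈ distTriang D)
    (hT' : Triangle.mk a' b' c' ∈ distTriang D) (e₂ : Q ⟶ Q') (e₃ : R ⟶ R') (h : b ≫ e₃ = e₂ ≫ b') :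
    ∃ e₁ : P ⟶ P', a ≫ e₂ = e₁ ≫ a' ∧ c ≫ e₁⟦(1 : ℤ)⟧' = e₃ ≫ c' :=
  complete_distinguished_triangle_morphism₁ _ _ hT hT' e₂ e₃ h

lemma mk_complete_morphism₂ (hT : Triangle.mk a b c ∈ distTriang D)
    (hT' : Triangle.mk a' b' c' ∈ distTriang D) (e₁ : P ⟶ P') (e₃ : R ⟶ R')
    (h : c ≫ e₁⟦(1 : ℤ)⟧' = e₃ ≫ c') : ∃ e₂ : Q ⟶ Q', a ≫ e₂ = e₁ ≫ a' ∧ b ≫ e₃ = e₂ ≫ b' :=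
  complete_distinguished_triangle_morphism₂ _ _ hT hT' e₁ e₃ h

end Triangles

section FiberOfComposite

variable {X Y Z Z₁ Z₂ W V : D} {α : X ⟶ Y} {β : Y ⟶ Z} {γ : Z ⟶ X⟦(1 : ℤ)⟧}
  {α' : Z₁ ⟶ Z} {β' : Z ⟶ Z₂} {γ' : Z₂ ⟶ Z₁⟦(1 : ℤ)⟧} {φ : W ⟶ Y} {χ : Z₂ ⟶ W⟦(1 : ℤ)⟧}
  {a : X ⟶ W} {μ : W ⟶ Z₁} {s : W ⟶ V} {r : V ⟶ X⟦(1 : ℤ)⟧} {ν : V ⟶ Z₁}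

lemma fiber_comp_exact (h₁ : Triangle.mk α β γ ∈ distTriang D)
    (h₂ : Triangle.mk α' β' γ' ∈ distTriang D) (h : Triangle.mk φ (β ≫ β') χ ∈ distTriang D)
    (ha₁ : α = a ≫ φ) (ha₂ : γ ≫ a⟦(1 : ℤ)⟧' = β' ≫ χ) (hμ₁ : φ ≫ β = μ ≫ α')
    (hμ₂ : χ ≫ μ⟦(1 : ℤ)⟧' = γ') (haμ : a ≫ μ = 0) {U : D} (g : U ⟶ W) (hg : g ≫ μ = 0) :
    ∃ x : U ⟶ X, g = x ≫ a := by
  obtain ⟨x, hx⟩ := mk_coyoneda_exact₂ h₁ (g ≫ φ) (by rw [assoc, hμ₁, ← assoc, hg, zero_comp])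
  obtain ⟨z, hz⟩ := mk_coyoneda_exact₁ h ((g - x ≫ a)⟦(1 : ℤ)⟧')
    (by rw [← Functor.map_comp, sub_comp, hx, assoc, ← ha₁, sub_self, Functor.map_zero])
  obtain ⟨y, rfl⟩ := mk_coyoneda_exact₃ h₂ z (by
    rw [← hμ₂, ← assoc, ← hz, ← Functor.map_comp, sub_comp, hg, assoc, haμ, comp_zero, sub_self,
      Functor.map_zero])
  obtain ⟨y', hy'⟩ := (shiftFunctor D (1 : ℤ)).map_surjective (y ≫ γ)
  have hy : (g - x ≫ a)⟦(1 : ℤ)⟧' = (y' ≫ a)⟦(1 : ℤ)⟧' := by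
    rw [hz, Functor.map_comp, hy', assoc, assoc, ha₂]
  exact ⟨x + y', by rw [add_comp, ← sub_eq_iff_eq_add']; exact (shiftFunctor D 1).map_injective hy⟩

lemma fiber_comp_exists_section (h₁ : Triangle.mk α β γ ∈ distTriang D)
    (h₂ : Triangle.mk α' β' γ' ∈ distTriang D) (h : Triangle.mk φ (β ≫ β') χ ∈ distTriang D)
    (ha₁ : α = a ≫ φ) (hμ₁ : φ ≫ β = μ ≫ α') (hc : Triangle.mk a s r ∈ distTriang D)
    (hν : s ≫ ν = μ) (hXZ₁ : ∀ f : X⟦(1 : ℤ)⟧ ⟶ Z₁, f = 0) (hXZ₂ : ∀ f : X⟦(1 : ℤ)⟧ ⟶ Z₂, f = 0)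
    (hZ₁Z₂ : ∀ f : Z₁⟦(1 : ℤ)⟧ ⟶ Z₂, f = 0) :
    ∃ w : Z₁ ⟶ V, w ≫ ν = 𝟙 Z₁ ∧ μ ≫ w ≫ r = 0 := by
  -- `u` is the extension of `Z₁` by `X` classified by `α' ≫ γ`, which the octahedral axiom
  -- would identify with `W`; comparing it with the cone `V` of `a` produces the section.
  obtain ⟨u, p, q, hu⟩ := distinguished_cocone_triangle₂ (α' ≫ γ)
  obtain ⟨m, hm₁, hm₂⟩ := mk_complete_morphism₂ hu h₁ (𝟙 X) α'
    (by rw [CategoryTheory.Functor.map_id, comp_id])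
  obtain ⟨m, rfl⟩ := mk_coyoneda_exact₂ h m
    (by rw [← assoc, ← hm₂, assoc, mk_comp_zero₁₂ h₂, comp_zero])
  have hp : p ≫ m = a := sub_eq_zero.mp (eq_zero_of_comp_mor₁_eq_zero h hXZ₂ _
    (by rw [sub_comp, assoc, hm₁, id_comp, ha₁, sub_self]))
  have huZ₂ : ∀ f : u⟦(1 : ℤ)⟧ ⟶ Z₂, f = 0 :=
    Triangle.hom_eq_zero_obj₂_of_tgt (Triangle.shift_distinguished _ hu 1) hXZ₂ hZ₁Z₂
  have hq : m ≫ μ = q := sub_eq_zero.mp (eq_zero_of_comp_mor₁_eq_zero h₂ huZ₂ _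
    (by rw [sub_comp, assoc, ← hμ₁, ← assoc, hm₂, sub_self]))
  obtain ⟨w, hw₁, hw₂⟩ := mk_complete_morphism hu hc (𝟙 X) m (by rw [hp, id_comp])
  refine ⟨w, sub_eq_zero.mp (eq_zero_of_mor₂_comp_eq_zero hu hXZ₁ _ ?_), ?_⟩
  · rw [comp_sub, ← assoc, hw₁, assoc, hν, hq, comp_id, sub_self]
  · rw [← hw₂, CategoryTheory.Functor.map_id, comp_id, ← assoc, ← hμ₁, assoc, mk_comp_zero₂₃ h₁,
      comp_zero]

lemma cone_hom_eq_zero (hc : Triangle.mk a s r ∈ distTriang D)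
    (hfac : ∀ g : X⟦(1 : ℤ)⟧ ⟶ W, ∃ x, g = x ≫ a)
    (hmono : ∀ y : X⟦(1 : ℤ)⟧ ⟶ X⟦(1 : ℤ)⟧, y ≫ a⟦(1 : ℤ)⟧' = 0 → y = 0)
    (f : X⟦(1 : ℤ)⟧ ⟶ V) : f = 0 := by
  obtain ⟨g, rfl⟩ := mk_coyoneda_exact₃ hc f (hmono _ (by rw [assoc, mk_comp_zero₃₁ hc, comp_zero]))
  obtain ⟨x, rfl⟩ := hfac g
  rw [assoc, mk_comp_zero₁₂ hc, comp_zero]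

lemma isIso_of_cone_of_section (hc : Triangle.mk a s r ∈ distTriang D) {w : Z₁ ⟶ V}
    (hexact : ∀ g : W ⟶ W, g ≫ μ = 0 → ∃ x, g = x ≫ a) (hν : s ≫ ν = μ)
    (hwν : w ≫ ν = 𝟙 Z₁) (hw : μ ≫ w ≫ r = 0) (hV : ∀ f : X⟦(1 : ℤ)⟧ ⟶ V, f = 0) :
    IsIso ν := by
  have hμw : μ ≫ w = s := by
    obtain ⟨l, hl⟩ := mk_coyoneda_exact₃ hc (μ ≫ w - s)
      (by rw [sub_comp, assoc, hw, mk_comp_zero₂₃ hc, sub_self])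
    obtain ⟨x, rfl⟩ := hexact l
      (by rw [← hν, ← assoc, ← hl, sub_comp, assoc, hwν, comp_id, hν, sub_self])
    rw [← sub_eq_zero, hl, assoc, mk_comp_zero₁₂ hc, comp_zero]
  refine ⟨w, sub_eq_zero.mp (eq_zero_of_mor₂_comp_eq_zero hc hV _ ?_), hwν⟩
  rw [comp_sub, ← assoc, hν, hμw, comp_id, sub_self]

end FiberOfComposite

lemma isExt_reassoc_of_isExt₃ {X Y Z Z₁ Z₂ : D} (hY : IsExt X Y Z) (hZ : IsExt Z₁ Z Z₂)
    (hXZ₁ : ∀ f : X⟦(1 : ℤ)⟧ ⟶ Z₁, f = 0) (hXZ₂ : ∀ f : X⟦(1 : ℤ)⟧ ⟶ Z₂, f = 0)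
    (hZ₁Z₂ : ∀ f : Z₁⟦(1 : ℤ)⟧ ⟶ Z₂, f = 0) :
    ∃ W, IsExt X W Z₁ ∧ IsExt W Y Z₂ := by
  obtain ⟨α, β, γ, h₁⟩ := hY
  obtain ⟨α', β', γ', h₂⟩ := hZ
  obtain ⟨W, φ, χ, h⟩ := distinguished_cocone_triangle₁ (β ≫ β')
  obtain ⟨μ, hμ₁, hμ₂⟩ := mk_complete_morphism₁ h h₂ β (𝟙 Z₂) (comp_id _)
  obtain ⟨a, ha₁, ha₂⟩ := mk_complete_morphism₁ h₁ h (𝟙 Y) β' (id_comp _).symm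
  rw [id_comp] at hμ₂
  rw [comp_id] at ha₁
  have haμ : a ≫ μ = 0 := eq_zero_of_comp_mor₁_eq_zero h₂ hXZ₂ _
    (by rw [assoc, ← hμ₁, ← assoc, ← ha₁, mk_comp_zero₁₂ h₁])
  have hexact : ∀ {U : D} (g : U ⟶ W), g ≫ μ = 0 → ∃ x, g = x ≫ a :=
    fiber_comp_exact h₁ h₂ h ha₁ ha₂ hμ₁ hμ₂ haμ
  obtain ⟨V, s, r, hc⟩ := distinguished_cocone_triangle a
  obtain ⟨ν, hν⟩ := mk_yoneda_exact₂ hc μ haμ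
  obtain ⟨w, hwν, hw⟩ :=
    fiber_comp_exists_section h₁ h₂ h ha₁ hμ₁ hc hν.symm hXZ₁ hXZ₂ hZ₁Z₂
  have hV := cone_hom_eq_zero hc (fun g => hexact g (hXZ₁ _)) fun y hy => by
    obtain ⟨η, rfl⟩ := mk_coyoneda_exact₁ h₁ y
      (by rw [ha₁, Functor.map_comp, ← assoc, hy, zero_comp])
    have hη : η = 0 := Triangle.hom_eq_zero_obj₂_of_src h₂ hXZ₁ hXZ₂ η
    rw [hη, zero_comp]
  have := isIso_of_cone_of_section hc hexact hν.symm hwν hw hV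
  exact ⟨W, ⟨a, s ≫ ν, inv ν ≫ r, mk_distinguished_of_iso₃ hc ν⟩, ⟨φ, β ≫ β', χ, h⟩⟩

section ConeOfComposite

variable {X₁ X₂ X Y Z Q V : D} {α : X ⟶ Y} {β : Y ⟶ Z} {γ : Z ⟶ X⟦(1 : ℤ)⟧}
  {d : X₁ ⟶ X} {e : X ⟶ X₂} {f : X₂ ⟶ X₁⟦(1 : ℤ)⟧} {φ : Y ⟶ Q} {χ : Q ⟶ X₁⟦(1 : ℤ)⟧}
  {μ : X₂ ⟶ Q} {b : Q ⟶ Z} {s : V ⟶ Q} {r : Z ⟶ V⟦(1 : ℤ)⟧} {ν : X₂ ⟶ V}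

lemma cone_comp_exact (h₁ : Triangle.mk α β γ ∈ distTriang D)
    (h₂ : Triangle.mk d e f ∈ distTriang D) (h : Triangle.mk (d ≫ α) φ χ ∈ distTriang D)
    (hμ₁ : e ≫ μ = α ≫ φ) (hμ₂ : f = μ ≫ χ) (hb₁ : φ ≫ b = β) (hb₂ : χ ≫ d⟦(1 : ℤ)⟧' = b ≫ γ)
    (hμb : μ ≫ b = 0) {U : D} (g : Q ⟶ U) (hg : μ ≫ g = 0) : ∃ x : Z ⟶ U, g = b ≫ x := by
  obtain ⟨x, hx⟩ := mk_yoneda_exact₂ h₁ (φ ≫ g) (by rw [← assoc, ← hμ₁, assoc, hg, comp_zero])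
  obtain ⟨z, hz⟩ := mk_yoneda_exact₃ h (g - b ≫ x) (by rw [comp_sub, hx, ← assoc, hb₁, sub_self])
  obtain ⟨y, rfl⟩ := mk_yoneda_exact₁ h₂ z
    (by rw [hμ₂, assoc, ← hz, comp_sub, hg, ← assoc, hμb, zero_comp, sub_self])
  exact ⟨x + γ ≫ y, by rw [comp_add, ← sub_eq_iff_eq_add', hz, ← assoc, hb₂, assoc]⟩

lemma cone_comp_exists_retraction (h₁ : Triangle.mk α β γ ∈ distTriang D)
    (h₂ : Triangle.mk d e f ∈ distTriang D) (h : Triangle.mk (d ≫ α) φ χ ∈ distTriang D)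
    (hμ₁ : e ≫ μ = α ≫ φ) (hb₁ : φ ≫ b = β) (hc : Triangle.mk s b r ∈ distTriang D)
    (hν : ν ≫ s = μ) (hX₁Z : ∀ g : X₁⟦(1 : ℤ)⟧ ⟶ Z, g = 0) (hX₂Z : ∀ g : X₂⟦(1 : ℤ)⟧ ⟶ Z, g = 0)
    (hX₁X₂ : ∀ g : X₁⟦(1 : ℤ)⟧ ⟶ X₂, g = 0) :
    ∃ w : V ⟶ X₂, ν ≫ w = 𝟙 X₂ ∧ r ≫ w⟦(1 : ℤ)⟧' ≫ μ⟦(1 : ℤ)⟧' = 0 := by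
  -- Dually, `u` is the extension of `Z` by `X₂` classified by `γ ≫ e⟦1⟧`.
  obtain ⟨u, p, q, hu⟩ := distinguished_cocone_triangle₂ (γ ≫ e⟦(1 : ℤ)⟧')
  obtain ⟨m, hm₁, hm₂⟩ := mk_complete_morphism₂ h₁ hu e (𝟙 Z) (id_comp _).symm
  obtain ⟨m, rfl⟩ := mk_yoneda_exact₂ h m
    (by rw [assoc, hm₁, ← assoc, mk_comp_zero₁₂ h₂, zero_comp])
  have hq : m ≫ q = b := sub_eq_zero.mp (eq_zero_of_mor₂_comp_eq_zero h hX₁Z _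
    (by rw [comp_sub, ← assoc, ← hm₂, comp_id, hb₁, sub_self]))
  have hX₁u : ∀ g : X₁⟦(1 : ℤ)⟧ ⟶ u, g = 0 :=
    Triangle.hom_eq_zero_obj₂_of_src hu hX₁X₂ hX₁Z
  have hp : μ ≫ m = p := sub_eq_zero.mp (eq_zero_of_mor₂_comp_eq_zero h₂ hX₁u _
    (by rw [comp_sub, ← assoc, hμ₁, assoc, hm₁, sub_self]))
  obtain ⟨w, hw₁, hw₂⟩ := mk_complete_morphism₁ hc hu m (𝟙 Z) (by rw [comp_id, hq])
  refine ⟨w, sub_eq_zero.mp (eq_zero_of_comp_mor₁_eq_zero hu hX₂Z _ ?_), ?_⟩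
  · rw [sub_comp, assoc, ← hw₁, ← assoc, hν, hp, id_comp, sub_self]
  · rw [← assoc, hw₂, id_comp, assoc, ← Functor.map_comp, hμ₁, Functor.map_comp, ← assoc,
      mk_comp_zero₃₁ h₁, zero_comp]

lemma fiber_hom_eq_zero (hc : Triangle.mk s b r ∈ distTriang D)
    (hfac : ∀ g : Q ⟶ Z⟦(-1 : ℤ)⟧, ∃ x, g = b ≫ x) (hepi : ∀ y : Z ⟶ Z, b ≫ y = 0 → y = 0)
    (g : V ⟶ Z⟦(-1 : ℤ)⟧) : g = 0 := by
  let i : Z⟦(-1 : ℤ)⟧⟦(1 : ℤ)⟧ ≅ Z := (shiftFunctorCompIsoId D (-1 : ℤ) 1 (by norm_num)).app Z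
  have hr : r ≫ g⟦(1 : ℤ)⟧' = 0 := by
    simpa using hepi (r ≫ g⟦(1 : ℤ)⟧' ≫ i.hom)
      (by rw [← assoc, mk_comp_zero₂₃ hc, zero_comp]) =≫ i.inv
  obtain ⟨g, rfl⟩ := mk_yoneda_exact₁_of_shift hc g hr
  obtain ⟨x, rfl⟩ := hfac g
  rw [← assoc, mk_comp_zero₁₂ hc, zero_comp]

lemma isIso_of_fiber_of_retraction (hc : Triangle.mk s b r ∈ distTriang D) {w : V ⟶ X₂}
    (hexact : ∀ g : Q ⟶ Q, μ ≫ g = 0 → ∃ x, g = b ≫ x) (hν : ν ≫ s = μ)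
    (hνw : ν ≫ w = 𝟙 X₂) (hw : r ≫ w⟦(1 : ℤ)⟧' ≫ μ⟦(1 : ℤ)⟧' = 0)
    (hV : ∀ g : V⟦(1 : ℤ)⟧ ⟶ Z, g = 0) : IsIso ν := by
  have hwμ : w ≫ μ = s := by
    obtain ⟨l, hl⟩ := mk_yoneda_exact₁_of_shift hc (w ≫ μ - s)
      (by rw [Functor.map_sub, comp_sub, Functor.map_comp, hw, mk_comp_zero₃₁ hc, sub_self])
    obtain ⟨x, rfl⟩ := hexact l
      (by rw [← hν, assoc, ← hl, comp_sub, ← assoc, hνw, id_comp, hν, sub_self])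
    rw [← sub_eq_zero, hl, ← assoc, mk_comp_zero₁₂ hc, zero_comp]
  refine ⟨w, hνw, sub_eq_zero.mp (eq_zero_of_comp_mor₁_eq_zero hc hV _ ?_)⟩
  rw [sub_comp, assoc, hν, hwμ, id_comp, sub_self]

end ConeOfComposite

lemma isExt_reassoc_of_isExt₁ {X₁ X₂ X Y Z : D} (hY : IsExt X Y Z) (hX : IsExt X₁ X X₂)
    (hX₁Z : ∀ f : X₁⟦(1 : ℤ)⟧ ⟶ Z, f = 0) (hX₂Z : ∀ f : X₂⟦(1 : ℤ)⟧ ⟶ Z, f = 0)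
    (hX₁X₂ : ∀ f : X₁⟦(1 : ℤ)⟧ ⟶ X₂, f = 0) :
    ∃ C, IsExt X₁ Y C ∧ IsExt X₂ C Z := by
  obtain ⟨α, β, γ, h₁⟩ := hY
  obtain ⟨d, e, f, h₂⟩ := hX
  obtain ⟨Q, φ, χ, h⟩ := distinguished_cocone_triangle (d ≫ α)
  obtain ⟨μ, hμ₁, hμ₂⟩ := mk_complete_morphism h₂ h (𝟙 X₁) α (id_comp _).symm
  obtain ⟨b, hb₁, hb₂⟩ := mk_complete_morphism h h₁ d (𝟙 Y) (comp_id _)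
  rw [CategoryTheory.Functor.map_id, comp_id] at hμ₂
  rw [id_comp] at hb₁
  have hμb : μ ≫ b = 0 := eq_zero_of_mor₂_comp_eq_zero h₂ hX₁Z _
    (by rw [← assoc, hμ₁, assoc, hb₁, mk_comp_zero₁₂ h₁])
  have hexact : ∀ {U : D} (g : Q ⟶ U), μ ≫ g = 0 → ∃ x, g = b ≫ x :=
    cone_comp_exact h₁ h₂ h hμ₁ hμ₂ hb₁ hb₂ hμb
  obtain ⟨V, s, r, hc⟩ := distinguished_cocone_triangle₁ b
  obtain ⟨ν, hν⟩ := mk_coyoneda_exact₂ hc μ hμb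
  obtain ⟨w, hνw, hw⟩ :=
    cone_comp_exists_retraction h₁ h₂ h hμ₁ hb₁ hc hν.symm hX₁Z hX₂Z hX₁X₂
  have hV := fiber_hom_eq_zero hc (fun g => hexact g ((hom_shift_one_eq_zero_iff X₂ Z).mp hX₂Z _))
    fun y hy => by
      obtain ⟨η, rfl⟩ := mk_yoneda_exact₃ h₁ y (by rw [← hb₁, assoc, hy, comp_zero])
      have hη : η = 0 :=
        Triangle.hom_eq_zero_obj₂_of_tgt (Triangle.shift_distinguished _ h₂ 1) hX₁Z hX₂Z η
      rw [hη, comp_zero]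
  have := isIso_of_fiber_of_retraction hc hexact hν.symm hνw hw
    ((hom_shift_one_eq_zero_iff V Z).mpr hV)
  exact ⟨Q, ⟨d ≫ α, φ, χ, h⟩, ⟨ν ≫ s, b, r ≫ (inv ν)⟦(1 : ℤ)⟧', mk_distinguished_of_iso₁ hc ν⟩⟩

section Hearts

omit [Preadditive D] [HasZeroObject D] [∀ n : ℤ, (shiftFunctor D n).Additive] [Pretriangulated D] in
lemma mem_shiftSet_zero {H : Set D} {X : D} (hX : X ∈ H) : X ∈ shiftSet H 0 :=
  ⟨X, hX, ⟨(shiftFunctorZero D ℤ).symm.app X⟩⟩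

omit [Preadditive D] [HasZeroObject D] [∀ n : ℤ, (shiftFunctor D n).Additive] [Pretriangulated D] in
lemma shift_mem_shiftSet {H : Set D} {X : D} {m : ℤ} (hX : X ∈ shiftSet H m) (n : ℤ) :
    X⟦n⟧ ∈ shiftSet H (m + n) := by
  obtain ⟨Y, hY, ⟨e⟩⟩ := hX
  exact ⟨Y, hY, ⟨(shiftFunctor D n).mapIso e ≪≫ ((shiftFunctorAdd' D m n (m + n) rfl).app Y).symm⟩⟩

omit [Preadditive D] [HasZeroObject D] [∀ n : ℤ, (shiftFunctor D n).Additive] [Pretriangulated D] in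
lemma shiftSet_mono {H H' : Set D} (h : H ⊆ H') {n : ℤ} : shiftSet H n ⊆ shiftSet H' n :=
  fun _ ⟨Y, hY, e⟩ => ⟨Y, h hY, e⟩

lemma IsExt.of_iso {A A' E E' B B' : D} (h : IsExt A E B) (eA : A ≅ A') (eE : E ≅ E')
    (eB : B ≅ B') : IsExt A' E' B' := by
  obtain ⟨f, g, k, hT⟩ := h
  refine ⟨eA.inv ≫ f ≫ eE.hom, eE.inv ≫ g ≫ eB.hom, eB.inv ≫ k ≫ eA.hom⟦(1 : ℤ)⟧',
    isomorphic_distinguished _ hT _ (Triangle.isoMk _ _ eA.symm eE.symm eB.symm ?_ ?_ ?_)⟩ <;>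
  simp [Triangle.mk, ← Functor.map_comp]

lemma IsExt.shift {A E B : D} (h : IsExt A E B) (n : ℤ) : IsExt (A⟦n⟧) (E⟦n⟧) (B⟦n⟧) := by
  obtain ⟨f, g, k, hT⟩ := h
  exact ⟨_, _, _, Triangle.shift_distinguished _ hT n⟩

lemma shiftSet_gabriel (C₁ C₂ : Set D) (n : ℤ) :
    shiftSet (gabriel C₁ C₂) n = gabriel (shiftSet C₁ n) (shiftSet C₂ n) := by
  ext E
  constructor
  · rintro ⟨U, ⟨A, hA, B, hB, hU⟩, ⟨e⟩⟩
    exact ⟨A⟦n⟧, ⟨A, hA, ⟨Iso.refl _⟩⟩, B⟦n⟧, ⟨B, hB, ⟨Iso.refl _⟩⟩,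
      (hU.shift n).of_iso (Iso.refl _) e.symm (Iso.refl _)⟩
  · rintro ⟨A', ⟨A, hA, ⟨eA⟩⟩, B', ⟨B, hB, ⟨eB⟩⟩, hE⟩
    let ε := shiftFunctorCompIsoId D n (-n) (add_neg_cancel n)
    refine ⟨E⟦-n⟧, ⟨A, hA, B, hB, (hE.shift (-n)).of_iso
      ((shiftFunctor D (-n)).mapIso eA ≪≫ ε.app A) (Iso.refl _)
      ((shiftFunctor D (-n)).mapIso eB ≪≫ ε.app B)⟩,
      ⟨((shiftFunctorCompIsoId D (-n) n (neg_add_cancel n)).app E).symm⟩⟩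

lemma IsHeart.hom_eq_zero {H : Set D} (hH : IsHeart H) {X Y : D} {m n : ℤ}
    (hX : X ∈ shiftSet H m) (hY : Y ∈ shiftSet H n) (h : n < m) (f : X ⟶ Y) : f = 0 := by
  obtain ⟨P, hP, ⟨eX⟩⟩ := hX
  obtain ⟨Q, hQ, ⟨eY⟩⟩ := hY
  let ε := shiftFunctorCompIsoId D m (-m) (add_neg_cancel m)
  let δ := shiftFunctorAdd' D n (-m) (n + -m) rfl
  have h0 := hH.negHom P hP Q hQ (n + -m) (by omega)
    (ε.inv.app P ≫ (eX.inv ≫ f ≫ eY.hom)⟦-m⟧' ≫ δ.inv.app Q)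
  have h1 : (eX.inv ≫ f ≫ eY.hom)⟦-m⟧' = 0 := by
    simpa using ε.hom.app P ≫= h0 =≫ δ.hom.app Q
  simpa using eX.hom ≫= (shiftFunctor D (-m)).map_eq_zero_iff.mp h1 =≫ eY.inv

lemma IsHeart.hom_shift_one_eq_zero {H : Set D} (hH : IsHeart H) {X Y : D} (hX : X ∈ H)
    (hY : Y ∈ H) (f : X⟦(1 : ℤ)⟧ ⟶ Y) : f = 0 :=
  hH.hom_eq_zero (shift_mem_shiftSet (mem_shiftSet_zero hX) 1) (mem_shiftSet_zero hY)
    (by norm_num) f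

end Hearts

section Tilting

variable {H T F : Set D}

lemma IsTorsionPair.mem_right_of_hom_eq_zero (hTF : IsTorsionPair H T F)
    (hTF₁ : ∀ t ∈ T, ∀ b ∈ F, ∀ f : t⟦(1 : ℤ)⟧ ⟶ b, f = 0) {M : D} (hM : M ∈ H)
    (hzero : ∀ t ∈ T, ∀ f : t ⟶ M, f = 0) : M ∈ F := by
  obtain ⟨t, ht, b, hb, i, p, c, hT⟩ := hTF.ses M hM
  have ht0 : 𝟙 t = 0 :=
    eq_zero_of_comp_mor₁_eq_zero hT (hTF₁ t ht b hb) _ (by rw [id_comp, hzero t ht i])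
  have : IsIso p := (Triangle.isZero₁_iff_isIso₂ _ hT).mp ((IsZero.iff_id_eq_zero t).mpr ht0)
  exact hTF.isoClosedF hb (asIso p).symm

lemma IsTorsionPair.zero_mem_left (hH : IsHeart H) (hTF : IsTorsionPair H T F) {O : D}
    (hO : IsZero O) : O ∈ T := by
  obtain ⟨t, ht, b, hb, i, p, c, hT⟩ := hTF.ses O (hH.zero_mem hO)
  have ht0 : 𝟙 t = 0 := eq_zero_of_comp_mor₁_eq_zero hT
    (hH.hom_shift_one_eq_zero (hTF.subsetT ht) (hTF.subsetF hb)) _ (hO.eq_of_tgt _ _)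
  exact hTF.isoClosedT ht (((IsZero.iff_id_eq_zero t).mpr ht0).iso hO)

lemma subset_tilted (hH : IsHeart H) (hTF : IsTorsionPair H T F) : F ⊆ tilted T F := by
  intro X hX
  have h0 : (0 : D) ∈ shiftSet T (-1) := ⟨0, hTF.zero_mem_left hH (isZero_zero D),
    ⟨(isZero_zero D).iso (Functor.map_isZero _ (isZero_zero D))⟩⟩
  exact ⟨X, hX, 0, h0, 𝟙 X, 0, 0, contractible_distinguished X⟩

lemma IsHeart.hom_shift_one_tilted_eq_zero (hH : IsHeart H) (hTF : IsTorsionPair H T F)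
    {P M : D} (hP : P ∈ H) (hM : M ∈ tilted T F) (f : P⟦(1 : ℤ)⟧ ⟶ M) : f = 0 := by
  obtain ⟨g, hg, s, hs, i, p, c, hT⟩ := hM
  exact Triangle.hom_eq_zero_obj₂_of_src hT (hH.hom_shift_one_eq_zero hP (hTF.subsetF hg))
    (hH.hom_eq_zero (shift_mem_shiftSet (mem_shiftSet_zero hP) 1) (shiftSet_mono hTF.subsetT hs)
      (by norm_num)) f

lemma mem_right_of_isExt_of_mem_tilted (hH : IsHeart H) (hTF : IsTorsionPair H T F)
    {X Y M : D} (hX : X ∈ H) (hY : Y ∈ H) (hE : IsExt X Y M) (hM : M ∈ tilted T F) : M ∈ F := by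
  obtain ⟨i, p, c, hE⟩ := hE
  obtain ⟨g, hg, s, hs, i', p', c', hT⟩ := hM
  have hs' : s ∈ shiftSet H (-1) := shiftSet_mono hTF.subsetT hs
  have hp' : p' = 0 := by
    obtain ⟨y, rfl⟩ := mk_yoneda_exact₃ hE p'
      (hH.hom_eq_zero (mem_shiftSet_zero hY) hs' (by norm_num) _)
    rw [hH.hom_eq_zero (shift_mem_shiftSet (mem_shiftSet_zero hX) 1) hs' (by norm_num) y,
      comp_zero]
  have hs0 : 𝟙 s = 0 := eq_zero_of_mor₂_comp_eq_zero hT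
    (hH.hom_eq_zero (shift_mem_shiftSet (mem_shiftSet_zero (hTF.subsetF hg)) 1) hs'
      (by norm_num)) _ (by rw [hp', zero_comp])
  have : IsIso i' := (Triangle.isZero₃_iff_isIso₁ _ hT).mp ((IsZero.iff_id_eq_zero s).mpr hs0)
  exact hTF.isoClosedF hg (asIso i')

lemma mem_right_of_hom_eq_zero_of_tilted (hH : IsHeart H) (hTF : IsTorsionPair H T F)
    {T' F' : Set D} (hTF' : IsTorsionPair (tilted T F) T' F') (hT'H : T' ⊆ H) {M : D}
    (hM : M ∈ tilted T F) (hzero : ∀ t ∈ T', ∀ f : t ⟶ M, f = 0) : M ∈ F' :=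
  hTF'.mem_right_of_hom_eq_zero
    (fun _ ht _ hb => hH.hom_shift_one_tilted_eq_zero hTF (hT'H ht) (hTF'.subsetF hb)) hM hzero

end Tilting

section TiltComposition

variable {A T F T' F' : Set D}

lemma isTorsionPair_gabriel_inter (hA : IsHeart A) (hTF : IsTorsionPair A T F)
    (hTF' : IsTorsionPair (tilted T F) T' F') (hsub : T' ⊆ F) :
    IsTorsionPair A (gabriel T T') (F ∩ F') where
  subsetT := fun _ ⟨_, ht, _, ht', hE⟩ =>
    hA.extClosed (hTF.subsetT ht) (hTF.subsetF (hsub ht')) hE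
  subsetF := fun _ hE => hTF.subsetF hE.1
  isoClosedT := fun ⟨t, ht, t', ht', hE⟩ e =>
    ⟨t, ht, t', ht', hE.of_iso (Iso.refl _) e (Iso.refl _)⟩
  isoClosedF := fun hX e => ⟨hTF.isoClosedF hX.1 e, hTF'.isoClosedF hX.2 e⟩
  hom_zero := by
    rintro E ⟨t, ht, t', ht', i, p, c, hE⟩ X ⟨hXF, hXF'⟩ φ
    obtain ⟨ψ, rfl⟩ := mk_yoneda_exact₂ hE φ (hTF.hom_zero t ht X hXF _)
    rw [hTF'.hom_zero t' ht' X hXF' ψ, comp_zero]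
  ses := by
    intro E hE
    obtain ⟨t, ht, f, hf, hE⟩ := hTF.ses E hE
    obtain ⟨t', ht', b, hb, hf'⟩ := hTF'.ses f (subset_tilted hA hTF hf)
    have htA := hTF.subsetT ht
    have ht'A := hTF.subsetF (hsub ht')
    have hbF : b ∈ F := mem_right_of_isExt_of_mem_tilted hA hTF ht'A (hTF.subsetF hf) hf'
      (hTF'.subsetF hb)
    obtain ⟨W, hW, hEW⟩ := isExt_reassoc_of_isExt₃ hE hf' (hA.hom_shift_one_eq_zero htA ht'A)
      (hA.hom_shift_one_eq_zero htA (hTF.subsetF hbF))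
      (hA.hom_shift_one_eq_zero ht'A (hTF.subsetF hbF))
    exact ⟨W, ⟨t, ht, t', ht', hW⟩, b, ⟨hbF, hb⟩, hEW⟩

lemma tilted_subset_tilted_gabriel (hA : IsHeart A) (hTF : IsTorsionPair A T F)
    (hTF' : IsTorsionPair (tilted T F) T' F') (hsub : T' ⊆ F) :
    tilted T' F' ⊆ tilted (gabriel T T') (F ∩ F') := by
  rintro E ⟨f', hf', s', hs', hE⟩
  obtain ⟨g, hg, s, hs, hf'⟩ := hTF'.subsetF hf'
  have hgA := mem_shiftSet_zero (hTF.subsetF hg)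
  have hsA : s ∈ shiftSet A (-1) := shiftSet_mono hTF.subsetT hs
  have hs'A : s' ∈ shiftSet A (-1) := shiftSet_mono (hsub.trans hTF.subsetF) hs'
  obtain ⟨C, hgC, hC⟩ := isExt_reassoc_of_isExt₁ hE hf'
    (hA.hom_eq_zero (shift_mem_shiftSet hgA 1) hs'A (by norm_num))
    (hA.hom_eq_zero (shift_mem_shiftSet hsA 1) hs'A (by norm_num))
    (hA.hom_eq_zero (shift_mem_shiftSet hgA 1) hsA (by norm_num))
  have hgF' : g ∈ F' := mem_right_of_hom_eq_zero_of_tilted hA hTF hTF' (hsub.trans hTF.subsetF)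
    (subset_tilted hA hTF hg) fun t ht φ => by
      obtain ⟨i, p, c, hT⟩ := hf'
      exact eq_zero_of_comp_mor₁_eq_zero hT (hA.hom_eq_zero
        (shift_mem_shiftSet (mem_shiftSet_zero (hTF.subsetF (hsub ht))) 1) hsA (by norm_num))
        φ (hTF'.hom_zero t ht _ hf' _)
  exact ⟨g, ⟨hg, hgF'⟩, C, by rw [shiftSet_gabriel]; exact ⟨s, hs, s', hs', hC⟩, hgC⟩

lemma tilted_gabriel_subset_tilted (hA : IsHeart A) (hTF : IsTorsionPair A T F)
    (hTF' : IsTorsionPair (tilted T F) T' F') (hsub : T' ⊆ F) :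
    tilted (gabriel T T') (F ∩ F') ⊆ tilted T' F' := by
  rintro E ⟨g, ⟨hg, hgF'⟩, s, hs, hE⟩
  rw [shiftSet_gabriel] at hs
  obtain ⟨x, hx, y, hy, hs⟩ := hs
  have hgA := mem_shiftSet_zero (hTF.subsetF hg)
  have hxA : x ∈ shiftSet A (-1) := shiftSet_mono hTF.subsetT hx
  have hyA : y ∈ shiftSet A (-1) := shiftSet_mono (hsub.trans hTF.subsetF) hy
  obtain ⟨w, hw, hwE⟩ := isExt_reassoc_of_isExt₃ hE hs
    (hA.hom_eq_zero (shift_mem_shiftSet hgA 1) hxA (by norm_num))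
    (hA.hom_eq_zero (shift_mem_shiftSet hgA 1) hyA (by norm_num))
    (hA.hom_eq_zero (shift_mem_shiftSet hxA 1) hyA (by norm_num))
  have hwF' : w ∈ F' := mem_right_of_hom_eq_zero_of_tilted hA hTF hTF' (hsub.trans hTF.subsetF)
    ⟨g, hg, x, hx, hw⟩ fun t ht φ => by
      obtain ⟨i, p, c, hT⟩ := hw
      obtain ⟨ψ, rfl⟩ := mk_coyoneda_exact₂ hT φ
        (hA.hom_eq_zero (mem_shiftSet_zero (hTF.subsetF (hsub ht))) hxA (by norm_num) _)
      rw [hTF'.hom_zero t ht g hgF' ψ, zero_comp]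
  exact ⟨w, hwF', y, hy, hwE⟩

end TiltComposition

/-- composition of left tilts. Let `A` be the heart of a bounded
t-structure of a triangulated category, let `(T, F)` be a torsion pair in `A`, and
let `(T', F')` be a torsion pair in the tilted heart `A* = ⟨F, T[-1]⟩`.  If
`T' ⊆ F`, then `(T ⋆ T', F ∩ F')` is a torsion pair in `A` and the left tilt
`A** = ⟨F', T'[-1]⟩` of `A*` equals the left tilt of `A` with respect to the
torsion pair `(T ⋆ T', F ∩ F')`. -/
theorem tilt_comp
    (A : Set D) (hA : IsHeart A) (T F : Set D) (hTF : IsTorsionPair A T F)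
    (T' F' : Set D) (hTF' : IsTorsionPair (tilted T F) T' F') (hsub : T' ⊆ F) :
    IsTorsionPair A (gabriel T T') (F ∩ F') ∧
      tilted T' F' = tilted (gabriel T T') (F ∩ F') :=
  ⟨isTorsionPair_gabriel_inter hA hTF hTF' hsub,
    (tilted_subset_tilted_gabriel hA hTF hTF' hsub).antisymm
      (tilted_gabriel_subset_tilted hA hTF hTF' hsub)⟩

end GreenSeqPaper
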